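/- arXiv:1108.3625 — 2 statements merged into one kernel-verified Lean document; each statement's English description precedes it below -/
import Mathlib

section
/- The class BSL of bounded semilinear languages is closed under concatenation: if L₁, L₂ ⊆ Σ* are both in BSL, then L₁·L₂ = {uv | u ∈ L₁, v ∈ L₂} is in BSL. -/
open scoped Classical

noncomputable section

/-! ### Basic word and language notions -/

/-- Number of occurrences of `b` in the list `l`. -/
def countOcc {β : Type} (l : List β) (b : β) : ℕ :=
  (l.filter fun s => decide (s = b)).length

/-- `wpow w k` is the word `w` concatenated with itself `k` times. -/
def wpow {β : Type} (w : List β) : ℕ → List β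
  | 0 => []
  | k + 1 => w ++ wpow w k

/-- The word `w₁^{k₁} ⋯ wₙ^{kₙ}`. -/
def socProd {β : Type} {n : ℕ} (w : Fin n → List β) (k : Fin n → ℕ) : List β :=
  (List.ofFn fun i => wpow (w i) (k i)).flatten

/-- `w₁, …, wₙ` is a socle of `L`: the `wᵢ` are nonempty and `L ⊆ w₁* ⋯ wₙ*`. -/
def IsSocle {β : Type} {n : ℕ} (L : Set (List β)) (w : Fin n → List β) : Prop :=
  (∀ i, w i ≠ []) ∧ ∀ x ∈ L, ∃ k : Fin n → ℕ, x = socProd w k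

/-- A language is bounded if it has a socle. -/
def BoundedLang {β : Type} (L : Set (List β)) : Prop :=
  ∃ (n : ℕ) (w : Fin n → List β), 0 < n ∧ IsSocle L w

/-- The iteration set of `L` w.r.t. the socle `w`. -/
def IterSet {β : Type} {n : ℕ} (L : Set (List β)) (w : Fin n → List β) :
    Set (Fin n → ℕ) :=
  {k | socProd w k ∈ L}

/-- Concatenation of two languages. -/
def catLang {β : Type} (X Y : Set (List β)) : Set (List β) :=
  {w | ∃ x ∈ X, ∃ y ∈ Y, w = x ++ y}

/-- The language `z* = {z^k | k ∈ ℕ}` of powers of a single word. -/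
def starWord {β : Type} (z : List β) : Set (List β) :=
  {w | ∃ k : ℕ, w = wpow z k}

/-- Kleene star of a language. -/
def starLang {β : Type} (K : Set (List β)) : Set (List β) :=
  {w | ∃ l : List (List β), (∀ u ∈ l, u ∈ K) ∧ w = l.flatten}

/-! ### Semilinear sets -/

/-- `C ⊆ ℕ^ι` is linear: `C = c + P*` for a finite `P`. -/
def IsLinearSetNat {ι : Type} (C : Set (ι → ℕ)) : Prop :=
  ∃ (c : ι → ℕ) (P : Set (ι → ℕ)), P.Finite ∧
    C = {x | ∃ p ∈ AddSubmonoid.closure P, x = c + p}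

/-- `C ⊆ ℕ^ι` is semilinear: a finite union of linear sets. -/
def IsSemilinearSetNat {ι : Type} (C : Set (ι → ℕ)) : Prop :=
  ∃ S : Set (Set (ι → ℕ)), S.Finite ∧ (∀ D ∈ S, IsLinearSetNat D) ∧ C = ⋃₀ S

/-- `L` is a bounded semilinear language: it has a socle whose iteration set is
semilinear. -/
def InBSL {β : Type} (L : Set (List β)) : Prop :=
  ∃ (n : ℕ) (w : Fin n → List β), 0 < n ∧ IsSocle L w ∧ IsSemilinearSetNat (IterSet L w)

/-! ### Finite automata, paths, runs -/

/-- A (nondeterministic) finite automaton with a single initial state, a set of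
final states and a finite set of transitions. -/
structure FinAut (α : Type) where
  σ : Type
  [finσ : Fintype σ]
  init : σ
  accept : Set σ
  δ : Set (σ × α × σ)
  finδ : δ.Finite

namespace FinAut

variable {α : Type}

/-- The type of transitions of `A`. -/
def Trans (A : FinAut α) : Type := {t : A.σ × α × A.σ // t ∈ A.δ}

def src {A : FinAut α} (t : A.Trans) : A.σ := t.1.1
def lbl {A : FinAut α} (t : A.Trans) : α := t.1.2.1
def tgt {A : FinAut α} (t : A.Trans) : A.σ := t.1.2.2

/-- `A.Steps q π r` holds when `π` is a path from state `q` to state `r`. -/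
inductive Steps (A : FinAut α) : A.σ → List A.Trans → A.σ → Prop
  | nil (q : A.σ) : Steps A q [] q
  | cons {q r : A.σ} {t : A.Trans} {π : List A.Trans} :
      src t = q → Steps A (tgt t) π r → Steps A q (t :: π) r

/-- The set of accepting paths of `A`, as a language over the transition set. -/
def Run (A : FinAut α) : Set (List A.Trans) :=
  {π | ∃ f ∈ A.accept, A.Steps A.init π f}

/-- The language of `A`: labels of accepting paths. -/
def lang (A : FinAut α) : Set (List α) :=
  {w | ∃ π ∈ A.Run, w = π.map lbl}

/-- `A` is deterministic. -/
def Deterministic (A : FinAut α) : Prop :=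
  ∀ ⦃p : A.σ⦄ ⦃a : α⦄ ⦃q q' : A.σ⦄, (p, a, q) ∈ A.δ → (p, a, q') ∈ A.δ → q = q'

/-- The Parikh image of a path: how many times each transition occurs. -/
def pathCount {A : FinAut α} (π : List A.Trans) : A.Trans → ℕ :=
  fun t => countOcc π t

/-- `A` is flat: it consists of a spine of states `q 0, …, q n` (`q 0` initial,
`q n` final, exactly one transition from `q i` to `q (i+1)` given by the label
`sl i`), together with, for at most one pair `lo k ≤ hi k` each, a back-path of
fresh states from `q (hi k)` to `q (lo k)`; the endpoints of distinct
back-paths are not strictly inside one another (no nested loops). -/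
def Flat (A : FinAut α) : Prop :=
  ∃ (n : ℕ) (q : Fin (n + 1) → A.σ) (sl : Fin n → α) (m : ℕ)
    (lo hi : Fin m → Fin (n + 1)) (fresh : Fin m → List A.σ) (bl : Fin m → List α),
    Function.Injective q ∧
    A.init = q 0 ∧
    A.accept = {q (Fin.last n)} ∧
    (∀ k, lo k ≤ hi k) ∧
    (∀ k k', k ≠ k' → (lo k, hi k) ≠ (lo k', hi k')) ∧
    (∀ k k', k ≠ k' →
      ¬(lo k < lo k' ∧ lo k' < hi k) ∧ ¬(lo k < hi k' ∧ hi k' < hi k)) ∧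
    (∀ k, (fresh k).Nodup) ∧
    (∀ k i, q i ∉ fresh k) ∧
    (∀ k k', k ≠ k' → ∀ s ∈ fresh k, s ∉ fresh k') ∧
    (∀ s : A.σ, (∃ i, s = q i) ∨ ∃ k, s ∈ fresh k) ∧
    (∀ k, (bl k).length = (fresh k).length + 1) ∧
    A.δ = {t | (∃ i : Fin n, t = (q i.castSucc, sl i, q i.succ)) ∨
        (∃ (k : Fin m) (j : ℕ) (s s' : A.σ) (a : α),
          (q (hi k) :: (fresh k ++ [q (lo k)]))[j]? = some s ∧
          (bl k)[j]? = some a ∧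
          (q (hi k) :: (fresh k ++ [q (lo k)]))[j + 1]? = some s' ∧
          t = (s, a, s'))}

end FinAut

/-! ### ε-automata -/

/-- The language of an ε-automaton (transitions labelled by `Option α`, where
`none` stands for ε): labels of accepting paths, erasing ε. -/
def epsLang {α : Type} (A : FinAut (Option α)) : Set (List α) :=
  {w | ∃ π ∈ A.Run, w = π.filterMap FinAut.lbl}

/-! ### Constrained automata -/

/-- The language of the constrained automaton `(A, C)`. -/
def CALang {α : Type} (A : FinAut α) (C : Set (A.Trans → ℕ)) : Set (List α) :=
  {w | ∃ π ∈ A.Run, FinAut.pathCount π ∈ C ∧ w = π.map FinAut.lbl}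

/-- The language of the ε-constrained automaton `(A, C)`. -/
def EpsCALang {α : Type} (A : FinAut (Option α)) (C : Set (A.Trans → ℕ)) :
    Set (List α) :=
  {w | ∃ π ∈ A.Run, FinAut.pathCount π ∈ C ∧ w = π.filterMap FinAut.lbl}

def RecByCA {α : Type} (L : Set (List α)) : Prop :=
  ∃ (A : FinAut α) (C : Set (A.Trans → ℕ)), IsSemilinearSetNat C ∧ CALang A C = L

def RecByDetCA {α : Type} (L : Set (List α)) : Prop :=
  ∃ (A : FinAut α) (C : Set (A.Trans → ℕ)),
    A.Deterministic ∧ IsSemilinearSetNat C ∧ CALang A C = L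

def RecByEpsCA {α : Type} (L : Set (List α)) : Prop :=
  ∃ (A : FinAut (Option α)) (C : Set (A.Trans → ℕ)),
    IsSemilinearSetNat C ∧ EpsCALang A C = L

/-- `L` is a finite union of languages of flat deterministic constrained
automata. -/
def FlatDetCAUnion {α : Type} (L : Set (List α)) : Prop :=
  ∃ (m : ℕ) (A : Fin m → FinAut α) (C : ∀ b, Set ((A b).Trans → ℕ)),
    (∀ b, (A b).Flat) ∧ (∀ b, (A b).Deterministic) ∧
    (∀ b, IsSemilinearSetNat (C b)) ∧ L = ⋃ b, CALang (A b) (C b)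

/-! ### Parikh automata -/

/-- Projection of a word over `Σ × ℕ^d` on `Σ`. -/
def PsiW {α : Type} {d : ℕ} (ω : List (α × (Fin d → ℕ))) : List α :=
  ω.map Prod.fst

/-- Extended Parikh image: the sum of the vector components. -/
def PhiTilde {α : Type} {d : ℕ} (ω : List (α × (Fin d → ℕ))) : Fin d → ℕ :=
  (ω.map Prod.snd).sum

/-- The language of the Parikh automaton `(A, C)`.  (Note that the set `D` of
vectors appearing on transitions of `A` is automatically finite, since the
transition set of `A` is finite.) -/
def PALang {α : Type} {d : ℕ} (A : FinAut (α × (Fin d → ℕ))) (C : Set (Fin d → ℕ)) :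
    Set (List α) :=
  {w | ∃ ω ∈ A.lang, PhiTilde ω ∈ C ∧ w = PsiW ω}

/-- Determinism for Parikh automata: at most one pair `(v, q')` for each state
`q` and letter `a`. -/
def PADet {α : Type} {d : ℕ} (A : FinAut (α × (Fin d → ℕ))) : Prop :=
  ∀ ⦃p : A.σ⦄ ⦃a : α⦄ ⦃v v' : Fin d → ℕ⦄ ⦃q q' : A.σ⦄,
    (p, (a, v), q) ∈ A.δ → (p, (a, v'), q') ∈ A.δ → v = v' ∧ q = q'

def RecByPA {α : Type} (L : Set (List α)) : Prop :=
  ∃ (d : ℕ) (A : FinAut (α × (Fin d → ℕ))) (C : Set (Fin d → ℕ)),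
    IsSemilinearSetNat C ∧ PALang A C = L

def RecByDetPA {α : Type} (L : Set (List α)) : Prop :=
  ∃ (d : ℕ) (A : FinAut (α × (Fin d → ℕ))) (C : Set (Fin d → ℕ)),
    PADet A ∧ IsSemilinearSetNat C ∧ PALang A C = L

/-! ### Affine Parikh automata -/

/-- Apply the affine functions `x ↦ M t * x + v t` of the transitions of a path,
in order (first transition first). -/
def pathApply {α : Type} {d : ℕ} (A : FinAut α) (M : A.Trans → Matrix (Fin d) (Fin d) ℕ)
    (v : A.Trans → Fin d → ℕ) : List A.Trans → (Fin d → ℕ) → (Fin d → ℕ)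
  | [], x => x
  | t :: π, x => pathApply A M v π ((M t).mulVec x + v t)

/-- The language of the affine Parikh automaton `(A, U, C)`, where the affine
function attached to transition `t` is `x ↦ M t * x + v t`. -/
def APALang {α : Type} {d : ℕ} (A : FinAut α) (M : A.Trans → Matrix (Fin d) (Fin d) ℕ)
    (v : A.Trans → Fin d → ℕ) (C : Set (Fin d → ℕ)) : Set (List α) :=
  {w | ∃ π ∈ A.Run, pathApply A M v π 0 ∈ C ∧ w = π.map FinAut.lbl}

/-- The monoid of the APA: the multiplicative matrix monoid generated by the
matrices of the transitions. -/
def APAMonoid {α : Type} {d : ℕ} (A : FinAut α) (M : A.Trans → Matrix (Fin d) (Fin d) ℕ) :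
    Set (Matrix (Fin d) (Fin d) ℕ) :=
  (Submonoid.closure (Set.range M) : Submonoid (Matrix (Fin d) (Fin d) ℕ))

/-! ### Semilinear regular expressions -/

/-- The language `y₀ x₁* y₁ ⋯ xₙ* yₙ` of a branch of an SLRE. -/
def branchLang {β : Type} {n : ℕ} (y : Fin (n + 1) → List β) (x : Fin n → List β) :
    Set (List β) :=
  {w | ∃ k : Fin n → ℕ,
    w = y 0 ++ (List.ofFn fun i : Fin n => wpow (x i) (k i) ++ y i.succ).flatten}

end

/-!
Take the socle `u, v` of `L₁ L₂`. A vector `k` is in its iteration set iff `(u, v)^k = (u, v)^l`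
for some `l` whose two halves lie in the iteration sets of `L₁` and `L₂`; so that set is a
projection of an intersection of semilinear sets once the equality set `{(k, l) | w^k = w'^l}` is
known to be semilinear. The equality set is Presburger-definable: the letter at position `p` of
`w^k` is determined by the block `wᵢ^kᵢ` containing `p` and by the offset of `p` in it modulo
`|wᵢ|`, both linear conditions on `(k, p)`; and semilinear sets are closed under the Boolean
operations and under projection (Ginsburg–Spanier).
-/

section Semilinear

variable {M N : Type*} [AddCommMonoid M] [AddCommMonoid N]

theorem isLinearSetNat_iff_isLinearSet {ι : Type} {C : Set (ι → ℕ)} :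
    IsLinearSetNat C ↔ IsLinearSet C := by
  unfold IsLinearSetNat IsLinearSet
  refine exists₂_congr fun c P => and_congr_right fun _ => ?_
  simp [Set.ext_iff, Set.mem_vadd_set, eq_comm]

theorem isSemilinearSetNat_iff_isSemilinearSet {ι : Type} {C : Set (ι → ℕ)} :
    IsSemilinearSetNat C ↔ IsSemilinearSet C := by
  unfold IsSemilinearSetNat IsSemilinearSet
  simp only [isLinearSetNat_iff_isLinearSet]

theorem IsSemilinearSet.proj_prod {p : M → N → Prop}
    (h : IsSemilinearSet {z : M × N | p z.1 z.2}) : IsSemilinearSet {x | ∃ y, p x y} := by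
  convert h.image (AddMonoidHom.fst M N)
  ext x
  simp

theorem isSemilinearSet_setOfPred_le [AddMonoid.FG M] (a b : ℕ) (f g : M →+ ℕ) :
    IsSemilinearSet {x | a + f x ≤ b + g x} := by
  convert (isSemilinearSet_setOfPred_eq a b (f.comp (AddMonoidHom.fst M ℕ) + AddMonoidHom.snd M ℕ)
    (g.comp (AddMonoidHom.fst M ℕ))).proj_prod (p := fun x c => a + (f x + c) = b + g x)
    using 2 with x
  simp [le_iff_exists_add, add_assoc, eq_comm]

end Semilinear

section Words

variable {β : Type} {m n : ℕ}

theorem List.getElem?_append_eq_some_iff {X Y : List β} {p : ℕ} {a : β} :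
    (X ++ Y)[p]? = some a ↔ X[p]? = some a ∨ ∃ p', Y[p']? = some a ∧ p = X.length + p' := by
  rw [List.getElem?_append]
  split_ifs with hp
  · refine ⟨Or.inl, ?_⟩
    rintro (h | ⟨p', -, rfl⟩)
    · exact h
    · omega
  · refine ⟨fun h => Or.inr ⟨_, h, by omega⟩, ?_⟩
    rintro (h | ⟨p', h, rfl⟩)
    · simp [List.getElem?_eq_none (by omega : X.length ≤ p)] at h
    · simpa using h

theorem length_wpow (w : List β) (k : ℕ) : (wpow w k).length = w.length * k := by
  induction k with
  | zero => rfl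
  | succ k ih => simp [wpow, ih, Nat.mul_succ, Nat.add_comm]

theorem getElem?_wpow_eq_some_iff {w : List β} {e p : ℕ} {a : β} :
    (wpow w e)[p]? = some a ↔ ∃ r, w[r]? = some a ∧ ∃ q < e, p = w.length * q + r := by
  induction e generalizing p with
  | zero => simp [wpow]
  | succ e ih =>
    simp only [wpow, List.getElem?_append_eq_some_iff, ih]
    constructor
    · rintro (h | ⟨p', ⟨r, h, q, hq, rfl⟩, rfl⟩)
      · exact ⟨p, h, 0, by omega, by simp⟩
      · exact ⟨r, h, q + 1, by omega, by ring⟩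
    · rintro ⟨r, h, _ | q, hq, rfl⟩
      · simpa using Or.inl h
      · exact Or.inr ⟨_, ⟨r, h, q, by omega, rfl⟩, by ring⟩

theorem socProd_cons (w : List β) (u : Fin m → List β) (e : ℕ) (k : Fin m → ℕ) :
    socProd (Fin.cons w u : Fin (m + 1) → List β) (Fin.cons e k) = wpow w e ++ socProd u k := by
  simp [socProd, List.ofFn_succ]

theorem socProd_append (u : Fin m → List β) (v : Fin n → List β) (k : Fin m → ℕ)
    (l : Fin n → ℕ) :
    socProd (Fin.append u v) (Fin.append k l) = socProd u k ++ socProd v l := by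
  simp [socProd, List.ofFn_add]

theorem length_socProd (u : Fin m → List β) (k : Fin m → ℕ) :
    (socProd u k).length = ∑ i, (u i).length * k i := by
  simp [socProd, List.length_flatten, List.sum_ofFn, length_wpow]

def blockStart (u : Fin m → List β) (i : Fin m) : (Fin m → ℕ) →+ ℕ :=
  ∑ j ∈ Finset.univ.filter (· < i), (u j).length • Pi.evalAddMonoidHom (fun _ => ℕ) j

theorem blockStart_apply (u : Fin m → List β) (i : Fin m) (k : Fin m → ℕ) :
    blockStart u i k = ∑ j, if j < i then (u j).length * k j else 0 := by
  rw [blockStart, AddMonoidHom.finsetSum_apply, Finset.sum_filter]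
  simp

theorem blockStart_cons_zero (w : List β) (u : Fin m → List β) (e : ℕ) (k : Fin m → ℕ) :
    blockStart (Fin.cons w u : Fin (m + 1) → List β) 0 (Fin.cons e k) = 0 := by
  simp [blockStart_apply]

theorem blockStart_cons_succ (w : List β) (u : Fin m → List β) (i : Fin m) (e : ℕ)
    (k : Fin m → ℕ) :
    blockStart (Fin.cons w u : Fin (m + 1) → List β) i.succ (Fin.cons e k) =
      w.length * e + blockStart u i k := by
  simp [blockStart_apply, Fin.sum_univ_succ, Fin.succ_pos]

theorem getElem?_socProd_eq_some_iff {u : Fin m → List β} {k : Fin m → ℕ} {p : ℕ} {a : β} :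
    (socProd u k)[p]? = some a ↔
      ∃ i r, (u i)[r]? = some a ∧ ∃ q < k i, p = blockStart u i k + (u i).length * q + r := by
  induction m generalizing p with
  | zero => simp [socProd]
  | succ m ih =>
    rw [← Fin.cons_self_tail u, ← Fin.cons_self_tail k, socProd_cons,
      List.getElem?_append_eq_some_iff, getElem?_wpow_eq_some_iff, Fin.exists_fin_succ]
    simp only [ih, Fin.cons_zero, Fin.cons_succ, blockStart_cons_zero, blockStart_cons_succ,
      length_wpow, zero_add]
    constructor
    · rintro (h | ⟨p', ⟨i, r, h, q, hq, rfl⟩, rfl⟩)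
      · exact Or.inl h
      · exact Or.inr ⟨i, r, h, q, hq, by ring⟩
    · rintro (h | ⟨i, r, h, q, hq, rfl⟩)
      · exact Or.inl h
      · exact Or.inr ⟨_, ⟨i, r, h, q, hq, rfl⟩, by ring⟩

theorem finite_range_getElem?_socProd (u : Fin m → List β) :
    (Set.range fun z : (Fin m → ℕ) × ℕ => (socProd u z.1)[z.2]?).Finite := by
  refine (((Set.finite_iUnion fun i => (u i).finite_toSet).image some).insert none).subset
    (Set.range_subset_iff.2 fun z => ?_)
  cases h : (socProd u z.1)[z.2]? with
  | none => exact Set.mem_insert none _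
  | some a =>
    obtain ⟨i, r, hr, -⟩ := getElem?_socProd_eq_some_iff.1 h
    exact Set.mem_insert_of_mem _ ⟨a, Set.mem_iUnion.2 ⟨i, List.mem_of_getElem? hr⟩, rfl⟩

end Words

section Positions

variable {β : Type} {m n : ℕ}

theorem isSemilinearSet_blockPositions (u : Fin m → List β) (i : Fin m) (r : ℕ) :
    IsSemilinearSet
      {z : (Fin m → ℕ) × ℕ | ∃ q < z.1 i, z.2 = blockStart u i z.1 + (u i).length * q + r} := by
  set k : ((Fin m → ℕ) × ℕ) × ℕ →+ Fin m → ℕ :=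
    (AddMonoidHom.fst _ _).comp (AddMonoidHom.fst _ _)
  refine IsSemilinearSet.proj_prod (p := fun (z : (Fin m → ℕ) × ℕ) q =>
    q < z.1 i ∧ z.2 = blockStart u i z.1 + (u i).length * q + r) ?_
  convert (isSemilinearSet_setOfPred_le 1 0 (AddMonoidHom.snd _ _)
    ((Pi.evalAddMonoidHom (fun _ => ℕ) i).comp k)).inter
    (isSemilinearSet_setOfPred_eq 0 r ((AddMonoidHom.snd _ _).comp (AddMonoidHom.fst _ _))
      ((blockStart u i).comp k + (u i).length • AddMonoidHom.snd _ _)) using 1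
  refine Set.ext fun y => ?_
  simp only [k, Set.mem_ofPred_eq, Set.mem_inter_iff]
  simp [Nat.one_add_le_iff, add_comm r]

theorem isSemilinearSet_getElem?_socProd_eq (u : Fin m → List β) (o : Option β) :
    IsSemilinearSet {z : (Fin m → ℕ) × ℕ | (socProd u z.1)[z.2]? = o} := by
  cases o with
  | none =>
    convert isSemilinearSet_setOfPred_le 0 0
      ((∑ i, (u i).length • Pi.evalAddMonoidHom (fun _ => ℕ) i).comp
        (AddMonoidHom.fst (Fin m → ℕ) ℕ))
      (AddMonoidHom.snd (Fin m → ℕ) ℕ) using 1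
    refine Set.ext fun z => ?_
    simp [length_socProd, AddMonoidHom.finsetSum_apply]
  | some a =>
    have hfin (i : Fin m) : {r | (u i)[r]? = some a}.Finite :=
      (Set.finite_Iio (u i).length).subset fun r hr => (List.getElem?_eq_some_iff.1 hr).1
    convert IsSemilinearSet.iUnion fun i =>
      IsSemilinearSet.biUnion (hfin i) fun r _ => isSemilinearSet_blockPositions u i r using 1
    refine Set.ext fun z => ?_
    simp only [Set.mem_ofPred_eq, Set.mem_iUnion, getElem?_socProd_eq_some_iff, exists_prop]

theorem isSemilinearSet_socProd_eq (u : Fin m → List β) (v : Fin n → List β) :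
    IsSemilinearSet {z : (Fin m → ℕ) × (Fin n → ℕ) | socProd u z.1 = socProd v z.2} := by
  set X := fun (z : (Fin m → ℕ) × (Fin n → ℕ)) (p : ℕ) => (socProd u z.1)[p]?
  set Y := fun (z : (Fin m → ℕ) × (Fin n → ℕ)) (p : ℕ) => (socProd v z.2)[p]?
  -- the pairs of distinct values (`none` past the end of a word) that the two words can take
  set S := (Set.range fun z : (Fin m → ℕ) × ℕ => (socProd u z.1)[z.2]?) ×ˢ
    (Set.range fun z : (Fin n → ℕ) × ℕ => (socProd v z.1)[z.2]?) \ Set.diagonal (Option β)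
  have hS : S.Finite :=
    ((finite_range_getElem?_socProd u).prod (finite_range_getElem?_socProd v)).sdiff
  have hmismatch : {w : ((Fin m → ℕ) × (Fin n → ℕ)) × ℕ | X w.1 w.2 ≠ Y w.1 w.2} =
      ⋃ o ∈ S, {w | X w.1 w.2 = o.1} ∩ {w | Y w.1 w.2 = o.2} := by
    refine Set.ext fun w => ⟨fun h => ?_, ?_⟩
    · exact Set.mem_biUnion (x := (X w.1 w.2, Y w.1 w.2))
        ⟨⟨⟨(w.1.1, w.2), rfl⟩, ⟨(w.1.2, w.2), rfl⟩⟩, h⟩ ⟨rfl, rfl⟩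
    · simp only [Set.mem_iUnion, Set.mem_inter_iff, Set.mem_ofPred_eq]
      rintro ⟨o, ⟨-, ho⟩, h₁, h₂⟩
      rwa [h₁, h₂]
  have hX (o : Option β) :
      IsSemilinearSet {w : ((Fin m → ℕ) × (Fin n → ℕ)) × ℕ | X w.1 w.2 = o} :=
    (isSemilinearSet_getElem?_socProd_eq u o).preimage
      (((AddMonoidHom.fst _ _).comp (AddMonoidHom.fst _ _)).prod (AddMonoidHom.snd _ _))
  have hY (o : Option β) :
      IsSemilinearSet {w : ((Fin m → ℕ) × (Fin n → ℕ)) × ℕ | Y w.1 w.2 = o} :=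
    (isSemilinearSet_getElem?_socProd_eq v o).preimage
      (((AddMonoidHom.snd _ _).comp (AddMonoidHom.fst _ _)).prod (AddMonoidHom.snd _ _))
  have hdiffer := IsSemilinearSet.proj_prod (p := fun z p => X z p ≠ Y z p)
    (hmismatch ▸ IsSemilinearSet.biUnion hS fun o _ => (hX o.1).inter (hY o.2))
  convert hdiffer.compl using 1
  refine Set.ext fun z => ?_
  simp [X, Y, List.ext_getElem?_iff]

end Positions

section Concatenation

variable {β : Type} {n₁ n₂ : ℕ} {L₁ L₂ : Set (List β)} {u : Fin n₁ → List β}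
  {v : Fin n₂ → List β}

theorem catLang_subset_range_socProd_append (hu : L₁ ⊆ Set.range (socProd u))
    (hv : L₂ ⊆ Set.range (socProd v)) :
    catLang L₁ L₂ ⊆ Set.range (socProd (Fin.append u v)) := by
  rintro _ ⟨_, hx₁, _, hx₂, rfl⟩
  obtain ⟨k₁, rfl⟩ := hu hx₁
  obtain ⟨k₂, rfl⟩ := hv hx₂
  exact ⟨Fin.append k₁ k₂, socProd_append u v k₁ k₂⟩

theorem iterSet_catLang_append (hu : L₁ ⊆ Set.range (socProd u))
    (hv : L₂ ⊆ Set.range (socProd v)) :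
    IterSet (catLang L₁ L₂) (Fin.append u v) =
      {k | ∃ l, socProd (Fin.append u v) k = socProd (Fin.append u v) l ∧
        l ∘ Fin.castAdd n₂ ∈ IterSet L₁ u ∧ l ∘ Fin.natAdd n₁ ∈ IterSet L₂ v} := by
  refine Set.ext fun k => ⟨?_, ?_⟩
  · rintro ⟨_, hx₁, _, hx₂, hk⟩
    obtain ⟨k₁, rfl⟩ := hu hx₁
    obtain ⟨k₂, rfl⟩ := hv hx₂
    refine ⟨Fin.append k₁ k₂, by rw [hk, socProd_append], ?_, ?_⟩
    · simpa [Function.comp_def, IterSet] using hx₁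
    · simpa [Function.comp_def, IterSet] using hx₂
  · rintro ⟨l, hkl, h₁, h₂⟩
    refine ⟨_, h₁, _, h₂, ?_⟩
    rw [hkl, ← socProd_append, Function.comp_def, Function.comp_def, Fin.append_castAdd_natAdd]

theorem isSemilinearSet_iterSet_catLang_append (hu : L₁ ⊆ Set.range (socProd u))
    (hv : L₂ ⊆ Set.range (socProd v)) (h₁ : IsSemilinearSet (IterSet L₁ u))
    (h₂ : IsSemilinearSet (IterSet L₂ v)) :
    IsSemilinearSet (IterSet (catLang L₁ L₂) (Fin.append u v)) := by
  rw [iterSet_catLang_append hu hv]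
  exact IsSemilinearSet.proj_prod ((isSemilinearSet_socProd_eq _ _).inter
    ((h₁.preimage ((LinearMap.funLeft ℕ ℕ (Fin.castAdd n₂)).comp (LinearMap.snd ℕ _ _))).inter
      (h₂.preimage ((LinearMap.funLeft ℕ ℕ (Fin.natAdd n₁)).comp (LinearMap.snd ℕ _ _)))))

end Concatenation

theorem bsl_concat_general {α : Type} (L₁ L₂ : Set (List α))
    (h₁ : InBSL L₁) (h₂ : InBSL L₂) : InBSL (catLang L₁ L₂) := by
  obtain ⟨n₁, u, hn₁, ⟨hu, hL₁⟩, hI₁⟩ := h₁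
  obtain ⟨n₂, v, -, ⟨hv, hL₂⟩, hI₂⟩ := h₂
  have hL₁' : L₁ ⊆ Set.range (socProd u) := fun x hx => (hL₁ x hx).imp fun _ => Eq.symm
  have hL₂' : L₂ ⊆ Set.range (socProd v) := fun x hx => (hL₂ x hx).imp fun _ => Eq.symm
  refine ⟨n₁ + n₂, Fin.append u v, by omega,
    ⟨Fin.addCases (by simpa using hu) (by simpa using hv),
      fun x hx => (catLang_subset_range_socProd_append hL₁' hL₂' hx).imp fun _ => Eq.symm⟩, ?_⟩
  rw [isSemilinearSetNat_iff_isSemilinearSet] at *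
  exact isSemilinearSet_iterSet_catLang_append hL₁' hL₂' hI₁ hI₂

/-- BSL is closed under concatenation. -/
theorem bsl_concat {α : Type} [Fintype α] (L₁ L₂ : Set (List α))
    (h₁ : InBSL L₁) (h₂ : InBSL L₂) : InBSL (catLang L₁ L₂) :=
  bsl_concat_general L₁ L₂ h₁ h₂
end

section
/- Let (A, C) be an ε-constrained automaton having the constraint-determinism property: for any two accepting paths π₁, π₂ of A with the same label, Φ(π₁) ∈ C iff Φ(π₂) ∈ C. Then there exists a deterministic affine Parikh automaton (A', U, E) such that L(A', U, E) = L(A, C), L(A') = L(A), and the matrix monoid M(U) is finite. -/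
open scoped Classical

/-!
Proof idea: determinize `A` by the subset construction, in which reading `a` from `S` leads to
the set of states reachable from `S` by a path labelled `ε* a ε*`.
Alongside, for every state `q` of the current subset the APA keeps the Parikh image of one path
from the initial state to `q` with the word read so far as label: each step fixes a predecessor
of `q` in the previous subset and a connecting path, so the new counters of `q` are the old
counters of the predecessor plus a constant vector. The linear parts therefore select at most one
old coordinate per new coordinate, and such matrices form a finite monoid. By constraint
determinism it does not matter which path is tracked, so the final vector is accepted iff the
tracked path to some accepting state has its Parikh image in `C`.
-/

open scoped Matrix Pointwise

section Semilinear

variable {ι : Type}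

theorem isLinearSetNat_iff {C : Set (ι → ℕ)} : IsLinearSetNat C ↔ IsLinearSet C := by
  have h (c : ι → ℕ) (P : Set (ι → ℕ)) : {x | ∃ p ∈ AddSubmonoid.closure P, x = c + p} =
      c +ᵥ (AddSubmonoid.closure P : Set (ι → ℕ)) := by
    ext x
    simp [Set.mem_vadd_set, eq_comm]
  simp only [IsLinearSetNat, IsLinearSet, h]

theorem isSemilinearSetNat_iff {C : Set (ι → ℕ)} : IsSemilinearSetNat C ↔ IsSemilinearSet C := by
  simp only [IsSemilinearSetNat, IsSemilinearSet, isLinearSetNat_iff]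

end Semilinear

namespace Matrix

variable {l m n R : Type*} [DecidableEq n]

def ofPartialMap [Zero R] [One R] (f : m → Option n) : Matrix m n R :=
  of fun i j => if f i = some j then 1 else 0

theorem ofPartialMap_mulVec [Fintype n] [NonAssocSemiring R] (f : m → Option n) (x : n → R)
    (i : m) : (ofPartialMap f *ᵥ x) i = (f i).elim 0 x := by
  cases h : f i <;> simp [mulVec, dotProduct, ofPartialMap, h]

theorem ofPartialMap_mul_ofPartialMap [Fintype n] [DecidableEq l] [NonAssocSemiring R]
    (f : m → Option n) (g : n → Option l) :
    (ofPartialMap f : Matrix m n R) * (ofPartialMap g : Matrix n l R) =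
      ofPartialMap fun i => (f i).bind g := by
  ext i k
  rw [mul_apply]
  cases h : f i <;>
    simp only [ofPartialMap, of_apply, h, reduceCtorEq, if_false, zero_mul, Finset.sum_const_zero,
      Option.bind_none, Option.bind_some, Option.some.injEq, ite_mul, one_mul,
      Finset.sum_ite_eq, Finset.mem_univ, if_true]

theorem ofPartialMap_some [NonAssocSemiring R] : (ofPartialMap some : Matrix n n R) = 1 := by
  ext i j
  simp [ofPartialMap, one_apply]

variable (n R) in
def partialMapSubmonoid [Fintype n] [NonAssocSemiring R] : Submonoid (Matrix n n R) where
  carrier := Set.range ofPartialMap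
  one_mem' := ⟨some, ofPartialMap_some⟩
  mul_mem' := by
    rintro _ _ ⟨f, rfl⟩ ⟨g, rfl⟩
    exact ⟨_, (ofPartialMap_mul_ofPartialMap f g).symm⟩

theorem finite_partialMapSubmonoid [Fintype n] [NonAssocSemiring R] :
    (partialMapSubmonoid n R : Set (Matrix n n R)).Finite :=
  Set.finite_range _

end Matrix

noncomputable section

namespace FinAut

variable {α : Type}

theorem Steps.append {A : FinAut α} {q r s : A.σ} {π₁ π₂ : List A.Trans}
    (h₁ : A.Steps q π₁ r) (h₂ : A.Steps r π₂ s) : A.Steps q (π₁ ++ π₂) s := by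
  induction h₁ with
  | nil => exact h₂
  | cons hsrc _ ih => exact .cons hsrc (ih h₂)

theorem pathCount_append {A : FinAut α} (π₁ π₂ : List A.Trans) :
    pathCount (π₁ ++ π₂) = pathCount π₁ + pathCount π₂ := by
  funext t
  simp [pathCount, countOcc, List.filter_append]

theorem Steps.exists_split {A : FinAut (Option α)} {q s : A.σ} {π : List A.Trans}
    (h : A.Steps q π s) {u v : List α} (huv : π.filterMap lbl = u ++ v) :
    ∃ r π₁ π₂, A.Steps q π₁ r ∧ A.Steps r π₂ s ∧
      π₁.filterMap lbl = u ∧ π₂.filterMap lbl = v := by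
  induction h generalizing u with
  | nil q =>
    obtain ⟨rfl, rfl⟩ := List.append_eq_nil_iff.mp huv.symm
    exact ⟨q, [], [], .nil q, .nil q, rfl, rfl⟩
  | @cons q r t π hsrc hπ ih =>
    cases u with
    | nil => exact ⟨q, [], t :: π, .nil q, .cons hsrc hπ, rfl, huv⟩
    | cons b u =>
      obtain ⟨u', hπu', hlbl⟩ : ∃ u', π.filterMap lbl = u' ++ v ∧
          ∀ π₁ : List A.Trans, π₁.filterMap lbl = u' → (t :: π₁).filterMap lbl = b :: u := by
        cases hl : lbl t with
        | none =>
          exact ⟨b :: u, by simpa [hl] using huv, fun π₁ h => by simp [hl, h]⟩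
        | some c =>
          simp only [List.filterMap_cons, hl, List.cons_append, List.cons.injEq] at huv
          obtain ⟨rfl, huv⟩ := huv
          exact ⟨u, huv, fun π₁ h => by simp [hl, h]⟩
      obtain ⟨r', π₁, π₂, h₁, h₂, e₁, e₂⟩ := ih hπu'
      exact ⟨r', t :: π₁, π₂, .cons hsrc h₁, h₂, hlbl π₁ e₁, e₂⟩

attribute [instance] FinAut.finσ

section Determinize

variable (A : FinAut (Option α))

def stepSet (S : Set A.σ) (a : α) : Set A.σ :=
  {q' | ∃ q ∈ S, ∃ π, A.Steps q π q' ∧ π.filterMap lbl = [a]}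

variable {A} {S : Set A.σ} {a : α} {q' : A.σ}

def stepPred (h : q' ∈ A.stepSet S a) : A.σ := h.choose

def stepPath (h : q' ∈ A.stepSet S a) : List A.Trans := h.choose_spec.2.choose

theorem stepPred_mem (h : q' ∈ A.stepSet S a) : stepPred h ∈ S := h.choose_spec.1

theorem steps_stepPath (h : q' ∈ A.stepSet S a) : A.Steps (stepPred h) (stepPath h) q' :=
  h.choose_spec.2.choose_spec.1

theorem filterMap_stepPath (h : q' ∈ A.stepSet S a) : (stepPath h).filterMap lbl = [a] :=
  h.choose_spec.2.choose_spec.2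

variable (A) [Fintype α]

/-- Starting from `{A.init}` instead of its ε-closure makes every state of the current subset the
end of a path labelled by the word read so far (the empty path included); the ε-moves are
absorbed by `stepSet` and by acceptance. -/
abbrev determinize : FinAut α where
  σ := Set A.σ
  init := {A.init}
  accept := {S | ∃ q ∈ S, ∃ f ∈ A.accept, ∃ τ, A.Steps q τ f ∧ τ.filterMap lbl = []}
  δ := {t | t.2.2 = A.stepSet t.1 t.2.1}
  finδ := Set.toFinite _

theorem determinize_deterministic : A.determinize.Deterministic :=
  fun _ _ _ _ hq hq' => hq.trans hq'.symm

variable {A}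

theorem tgt_determinize (t : A.determinize.Trans) : tgt t = A.stepSet (src t) (lbl t) := t.2

theorem exists_determinize_steps {p f : A.σ} {π₀ : List A.Trans} (h₀ : A.Steps p π₀ f)
    (hne : π₀.filterMap lbl ≠ []) {S : Set A.σ} (hp : p ∈ S) :
    ∃ (π : List A.determinize.Trans) (T : Set A.σ),
      A.determinize.Steps S π T ∧ π.map lbl = π₀.filterMap lbl ∧ f ∈ T := by
  generalize hw : π₀.filterMap lbl = w at hne
  induction w generalizing p π₀ S with
  | nil => contradiction
  | cons a w ih =>
    let t : A.determinize.Trans := ⟨(S, a, A.stepSet S a), rfl⟩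
    rcases eq_or_ne w [] with rfl | hw'
    · exact ⟨[t], _, .cons rfl (.nil _), rfl, p, hp, π₀, h₀, hw⟩
    · obtain ⟨r, π₁, π₂, h₁, h₂, e₁, e₂⟩ := h₀.exists_split (u := [a]) hw
      obtain ⟨π, T, hπ, hlbl, hf⟩ := ih (S := A.stepSet S a) h₂ ⟨p, hp, π₁, h₁, e₁⟩ e₂ hw'
      exact ⟨t :: π, T, .cons rfl hπ, congrArg (a :: ·) hlbl, hf⟩

theorem exists_determinize_run {π₀ : List A.Trans} {f : A.σ} (h₀ : A.Steps A.init π₀ f)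
    (hf : f ∈ A.accept) :
    ∃ (π : List A.determinize.Trans) (T : Set A.σ), A.determinize.Steps {A.init} π T ∧
      T ∈ A.determinize.accept ∧ π.map lbl = π₀.filterMap lbl ∧ (π ≠ [] → f ∈ T) := by
  by_cases hw : π₀.filterMap lbl = []
  · exact ⟨[], _, .nil _, ⟨A.init, rfl, f, hf, π₀, h₀, hw⟩, hw.symm, (absurd rfl ·)⟩
  · obtain ⟨π, T, hπ, hlbl, hfT⟩ := exists_determinize_steps h₀ hw (Set.mem_singleton A.init)
    exact ⟨π, T, hπ, ⟨f, hfT, f, hf, [], .nil f, rfl⟩, hlbl, fun _ => hfT⟩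

end Determinize

section Tracking

variable (A : FinAut (Option α))

instance : Fintype A.Trans := A.finδ.fintype

/-- Coordinates of the tracking vector: `inl q` flags membership of `q` in the current subset,
`inr (q, s)` counts the occurrences of `s` on the path tracked to `q`. -/
abbrev TrackIdx : Type := A.σ ⊕ (A.σ × A.Trans)

def trackDim : ℕ := Fintype.card A.TrackIdx

def trackEquiv : A.TrackIdx ≃ Fin A.trackDim := Fintype.equivFin _

def flag (q : A.σ) : Fin A.trackDim := A.trackEquiv (.inl q)

def block (q : A.σ) : (Fin A.trackDim → ℕ) →ₗ[ℕ] A.Trans → ℕ :=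
  LinearMap.funLeft ℕ ℕ fun s => A.trackEquiv (.inr (q, s))

theorem block_apply (q : A.σ) (x : Fin A.trackDim → ℕ) (s : A.Trans) :
    A.block q x s = x (A.trackEquiv (.inr (q, s))) :=
  rfl

def trackPred (S : Set A.σ) (a : α) : A.TrackIdx → Option A.TrackIdx
  | .inl _ => none
  | .inr (q, s) => if h : q ∈ A.stepSet S a then some (.inr (stepPred h, s)) else none

def trackIncr (S : Set A.σ) (a : α) : A.TrackIdx → ℕ
  | .inl q => if q ∈ A.stepSet S a then 1 else 0
  | .inr (q, s) => if h : q ∈ A.stepSet S a then pathCount (stepPath h) s else 0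

def Tracks (S : Set A.σ) (u : List α) (x : Fin A.trackDim → ℕ) : Prop :=
  ∀ q ∈ S, ∃ ρ, A.Steps A.init ρ q ∧ ρ.filterMap lbl = u ∧ pathCount ρ = A.block q x

theorem tracks_init : A.Tracks {A.init} [] 0 := by
  rintro q rfl
  exact ⟨[], .nil _, rfl, by funext; rfl⟩

/-- Before the first letter all flags are still `0`, so the empty word is handled by the
zero vector. -/
def trackAccept (C : Set (A.Trans → ℕ)) : Set (Fin A.trackDim → ℕ) :=
  {x | ([] ∈ EpsCALang A C ∧ x = 0) ∨ ∃ q ∈ A.accept, x (A.flag q) = 1 ∧ A.block q x ∈ C}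

theorem isSemilinearSet_trackAccept {C : Set (A.Trans → ℕ)} (hC : IsSemilinearSet C) :
    IsSemilinearSet (A.trackAccept C) := by
  have hE : A.trackAccept C = {x | [] ∈ EpsCALang A C ∧ x = 0} ∪
      ⋃ q ∈ A.accept, Pi.evalAddMonoidHom (fun _ => ℕ) (A.flag q) ⁻¹' {1} ∩ A.block q ⁻¹' C := by
    ext x
    simp [trackAccept, and_left_comm]
  rw [hE]
  refine .union ?_ (.biUnion (Set.toFinite _) fun q _ =>
    ((IsSemilinearSet.singleton 1).preimage _).inter (hC.preimage _))
  by_cases h : [] ∈ EpsCALang A C <;> simp [h]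

variable [Fintype α]

def trackMatrix (t : A.determinize.Trans) : Matrix (Fin A.trackDim) (Fin A.trackDim) ℕ :=
  Matrix.ofPartialMap fun i => (A.trackPred (src t) (lbl t) (A.trackEquiv.symm i)).map A.trackEquiv

def trackVec (t : A.determinize.Trans) : Fin A.trackDim → ℕ :=
  fun i => A.trackIncr (src t) (lbl t) (A.trackEquiv.symm i)

variable {A}

theorem trackStep_apply (t : A.determinize.Trans) (x : Fin A.trackDim → ℕ) (k : A.TrackIdx) :
    (A.trackMatrix t *ᵥ x + A.trackVec t) (A.trackEquiv k) =
      (A.trackPred (src t) (lbl t) k).elim 0 (fun j => x (A.trackEquiv j)) +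
        A.trackIncr (src t) (lbl t) k := by
  simp [trackMatrix, trackVec, Matrix.ofPartialMap_mulVec, Option.elim_map, Function.comp_def]

theorem pathApply_flag {S T : A.determinize.σ} {π : List A.determinize.Trans}
    (hπ : A.determinize.Steps S π T) (hne : π ≠ []) (x : Fin A.trackDim → ℕ) (q : A.σ) :
    pathApply A.determinize A.trackMatrix A.trackVec π x (A.flag q) = if q ∈ T then 1 else 0 := by
  induction hπ generalizing x with
  | nil => contradiction
  | @cons _ _ t π _ hπ ih =>
    rcases eq_or_ne π [] with rfl | hπne
    · cases hπ
      rw [pathApply, pathApply, flag, trackStep_apply, tgt_determinize]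
      simp [trackPred, trackIncr]
    · exact ih hπne _

theorem Tracks.step {u : List α} {x : Fin A.trackDim → ℕ} {t : A.determinize.Trans}
    (h : A.Tracks (src t) u x) :
    A.Tracks (tgt t) (u ++ [lbl t]) (A.trackMatrix t *ᵥ x + A.trackVec t) := by
  intro q hq
  rw [tgt_determinize] at hq
  obtain ⟨ρ, hρ, hlbl, hcount⟩ := h _ (stepPred_mem hq)
  refine ⟨ρ ++ stepPath hq, hρ.append (steps_stepPath hq),
    by simp [hlbl, filterMap_stepPath hq], ?_⟩
  funext s
  rw [block_apply, trackStep_apply]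
  simp [pathCount_append, hcount, block_apply, trackPred, trackIncr, hq]

theorem Tracks.steps {S T : A.determinize.σ} {u : List α} {x : Fin A.trackDim → ℕ}
    {π : List A.determinize.Trans} (h : A.Tracks S u x) (hπ : A.determinize.Steps S π T) :
    A.Tracks T (u ++ π.map lbl) (pathApply A.determinize A.trackMatrix A.trackVec π x) := by
  induction hπ generalizing u x with
  | nil => simpa [pathApply] using h
  | cons hsrc _ ih =>
    subst hsrc
    simpa [pathApply] using ih h.step

theorem tracks_of_steps {T : Set A.σ} {π : List A.determinize.Trans}
    (hπ : A.determinize.Steps {A.init} π T) :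
    A.Tracks T (π.map lbl) (pathApply A.determinize A.trackMatrix A.trackVec π 0) := by
  simpa using (tracks_init A).steps hπ

variable (A)

theorem determinize_lang : A.determinize.lang = epsLang A := by
  ext w
  constructor
  · rintro ⟨π, ⟨T, ⟨q, hq, f, hf, τ, hτ, hτl⟩, hπ⟩, rfl⟩
    obtain ⟨ρ, hρ, hρl, -⟩ := tracks_of_steps hπ q hq
    exact ⟨ρ ++ τ, ⟨f, hf, hρ.append hτ⟩, by simp [hρl, hτl]⟩
  · rintro ⟨π₀, ⟨f, hf, h₀⟩, rfl⟩
    obtain ⟨π, T, hπ, hT, hlbl, -⟩ := exists_determinize_run h₀ hf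
    exact ⟨π, ⟨T, hT, hπ⟩, hlbl.symm⟩

theorem apaLang_trackAccept_subset (C : Set (A.Trans → ℕ)) :
    APALang A.determinize A.trackMatrix A.trackVec (A.trackAccept C) ⊆ EpsCALang A C := by
  rintro _ ⟨π, ⟨T, ⟨q, hq, -⟩, hπ⟩, hx, rfl⟩
  rcases eq_or_ne π [] with rfl | hne
  · rcases hx with ⟨hnil, -⟩ | ⟨_, -, hflag, -⟩
    · exact hnil
    · exact absurd hflag zero_ne_one
  · have hflag := pathApply_flag hπ hne 0
    rcases hx with ⟨-, hx⟩ | ⟨q', hq'F, hq'flag, hblock⟩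
    · simpa [hx, hq] using hflag q
    · have hq'T : q' ∈ T := by
        by_contra h
        simp [hflag, h] at hq'flag
      obtain ⟨ρ, hρ, hρl, hρc⟩ := tracks_of_steps hπ q' hq'T
      exact ⟨ρ, ⟨q', hq'F, hρ⟩, hρc ▸ hblock, hρl.symm⟩

theorem epsCALang_subset_apaLang_trackAccept {C : Set (A.Trans → ℕ)}
    (hcd : ∀ π₁ π₂, π₁ ∈ A.Run → π₂ ∈ A.Run →
      π₁.filterMap lbl = π₂.filterMap lbl → (pathCount π₁ ∈ C ↔ pathCount π₂ ∈ C)) :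
    EpsCALang A C ⊆ APALang A.determinize A.trackMatrix A.trackVec (A.trackAccept C) := by
  rintro _ ⟨π₀, hπ₀, hC₀, rfl⟩
  obtain ⟨f, hf, h₀⟩ := id hπ₀
  obtain ⟨π, T, hπ, hT, hlbl, hfT⟩ := exists_determinize_run h₀ hf
  refine ⟨π, ⟨T, hT, hπ⟩, ?_, hlbl.symm⟩
  rcases eq_or_ne π [] with rfl | hne
  · exact .inl ⟨⟨π₀, hπ₀, hC₀, hlbl⟩, rfl⟩
  · obtain ⟨ρ, hρ, hρl, hρc⟩ := tracks_of_steps hπ f (hfT hne)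
    refine .inr ⟨f, hf, by simp [pathApply_flag hπ hne, hfT hne], ?_⟩
    rw [← hρc]
    exact (hcd π₀ ρ hπ₀ ⟨f, hf, hρ⟩ (hρl.trans hlbl).symm).mp hC₀

theorem finite_apaMonoid_trackMatrix : (APAMonoid A.determinize A.trackMatrix).Finite :=
  Matrix.finite_partialMapSubmonoid.subset <|
    Submonoid.closure_le.mpr <| Set.range_subset_iff.mpr fun _ => ⟨_, rfl⟩

end Tracking

end FinAut

end

/-- An ε-constrained automaton with the constraint-determinism
property can be simulated by a deterministic affine Parikh automaton with a
finite matrix monoid, preserving the language of the underlying automaton. -/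
theorem constraintDet_epsCA_to_detAPA {α : Type} [Fintype α]
    (A : FinAut (Option α)) (C : Set (A.Trans → ℕ)) (hC : IsSemilinearSetNat C)
    (hcd : ∀ π₁ π₂, π₁ ∈ A.Run → π₂ ∈ A.Run →
      π₁.filterMap FinAut.lbl = π₂.filterMap FinAut.lbl →
      (FinAut.pathCount π₁ ∈ C ↔ FinAut.pathCount π₂ ∈ C)) :
    ∃ (d : ℕ) (A' : FinAut α) (M : A'.Trans → Matrix (Fin d) (Fin d) ℕ)
      (v : A'.Trans → Fin d → ℕ) (E : Set (Fin d → ℕ)),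
      A'.Deterministic ∧ IsSemilinearSetNat E ∧
      APALang A' M v E = EpsCALang A C ∧
      A'.lang = epsLang A ∧
      (APAMonoid A' M).Finite :=
  ⟨A.trackDim, A.determinize, A.trackMatrix, A.trackVec, A.trackAccept C,
    A.determinize_deterministic,
    isSemilinearSetNat_iff.mpr (A.isSemilinearSet_trackAccept (isSemilinearSetNat_iff.mp hC)),
    (A.apaLang_trackAccept_subset C).antisymm (A.epsCALang_subset_apaLang_trackAccept hcd),
    A.determinize_lang, A.finite_apaMonoid_trackMatrix⟩
end
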